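/- arXiv:2602.20325 — 3 statements merged into one kernel-verified Lean document; each statement's English description precedes it below -/
import Mathlib

section
/- Let C ⊆ ℝⁿ be a convex body with C ⊆ x + R·B₂ⁿ for some x ∈ ℝⁿ and R > 0. Then |C| ≤ (n+1) ω_{n−1} R^{n−1} r(C), where r(C) is the inradius of C and ω_{n−1} is the volume of the (n−1)-dimensional Euclidean unit ball. -/
/-!
Let `closedBall c r` be a largest ball inside `C`; it exists by compactness, and `r` is the
inradius. Call a unit vector `u` a supporting normal if `⟪u, y - c⟫ ≤ r` on `C`. By maximality
every point lies within distance `r` of the complement of `C`; separating `C` from complement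
points near `c + t • v` and letting `t → 0` gives, for every direction `v`, a supporting normal
with `⟪u, v⟫ ≥ 0`. Hence `0` is in the convex hull of the supporting normals, and by Carathéodory
already in that of `n + 1` of them, so every `y ∈ C` satisfies `0 ≤ ⟪u, y - c⟫ ≤ r` for one of
these. Thus `C` is covered by `n + 1` slabs of width `r`, and each slab meets `closedBall x R` in
a set of volume at most `r ω_{n-1} R^{n-1}`.
-/

open MeasureTheory Metric Set

noncomputable section

def inradius {n : ℕ} (C : Set (EuclideanSpace ℝ (Fin n))) : ℝ :=
  sSup {r : ℝ | ∃ x : EuclideanSpace ℝ (Fin n), closedBall x r ⊆ C}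

open scoped RealInnerProductSpace

def IsLargestInscribedBall {X : Type*} [PseudoMetricSpace X] (C : Set X) (c : X) (r : ℝ) :
    Prop :=
  closedBall c r ⊆ C ∧ ∀ y ρ, closedBall y ρ ⊆ C → ρ ≤ r

section InscribedBall

variable {X : Type*} [PseudoMetricSpace X] {C : Set X} {c : X} {r : ℝ}

theorem IsLargestInscribedBall.nonneg (h : IsLargestInscribedBall C c r) : 0 ≤ r := by
  by_contra! hr
  have := h.2 c (r / 2) (by rw [closedBall_eq_empty.2 (by linarith)]; exact empty_subset C)
  linarith

theorem le_infDist_compl_of_closedBall_subset {y : X} {ρ : ℝ} (hC : Cᶜ.Nonempty)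
    (h : closedBall y ρ ⊆ C) : ρ ≤ infDist y Cᶜ :=
  (le_infDist hC).2 fun _ hz => (not_le.1 fun hzy => hz (h (mem_closedBall'.2 hzy))).le

variable {E : Type*} [NormedAddCommGroup E] [NormedSpace ℝ E] {C : Set E} {c : E} {r : ℝ}

theorem IsLargestInscribedBall.infDist_compl_le (h : IsLargestInscribedBall C c r)
    (hC : IsClosed C) (p : E) : infDist p Cᶜ ≤ r := by
  by_cases hp : p ∈ C
  · refine h.2 p _ ?_
    simpa [hC.closure_eq] using closedBall_infDist_compl_subset_closure hp
  · rw [infDist_zero_of_mem hp]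
    exact h.nonneg

theorem exists_isLargestInscribedBall [Nontrivial E] (hC : IsCompact C) (hne : C.Nonempty) :
    ∃ c r, IsLargestInscribedBall C c r := by
  obtain ⟨c, hc, hmax⟩ := hC.exists_isMaxOn hne (continuous_infDist_pt Cᶜ).continuousOn
  have hCc : Cᶜ.Nonempty := nonempty_compl.2 hC.ne_univ
  refine ⟨c, infDist c Cᶜ, ?_, fun y ρ hy => ?_⟩
  · simpa [hC.isClosed.closure_eq] using closedBall_infDist_compl_subset_closure hc
  · rcases lt_or_ge ρ 0 with hρ | hρ
    · exact hρ.le.trans infDist_nonneg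
    · exact (le_infDist_compl_of_closedBall_subset hCc hy).trans
        (hmax (hy (mem_closedBall_self hρ)))

end InscribedBall

theorem IsLargestInscribedBall.inradius_eq {n : ℕ} {C : Set (EuclideanSpace ℝ (Fin n))}
    {c : EuclideanSpace ℝ (Fin n)} {r : ℝ} (h : IsLargestInscribedBall C c r) :
    inradius C = r :=
  IsGreatest.csSup_eq ⟨⟨c, h.1⟩, fun _ ⟨y, hy⟩ => h.2 y _ hy⟩

theorem inradius_empty {n : ℕ} : inradius (∅ : Set (EuclideanSpace ℝ (Fin n))) = 0 := by
  simp only [inradius, subset_empty_iff, closedBall_eq_empty, exists_const]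
  exact csSup_Iio

section ConvexHull

variable {F : Type*} [NormedAddCommGroup F] [NormedSpace ℝ F] [FiniteDimensional ℝ F]

theorem exists_finset_card_le_finrank_succ_of_mem_convexHull {s : Set F} {x : F}
    (hx : x ∈ convexHull ℝ s) :
    ∃ t : Finset F, ↑t ⊆ s ∧ t.card ≤ Module.finrank ℝ F + 1 ∧ x ∈ convexHull ℝ (t : Set F) := by
  rw [convexHull_eq_union] at hx
  simp only [mem_iUnion] at hx
  obtain ⟨t, hts, hai, hxt⟩ := hx
  have hcard := hai.card_le_finrank_succ
  have hspan := Submodule.finrank_le (vectorSpan ℝ (range ((↑) : t → F)))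
  rw [Fintype.card_coe] at hcard
  exact ⟨t, hts, by omega, hxt⟩

theorem IsCompact.convexHull {s : Set F} (hs : IsCompact s) :
    IsCompact (_root_.convexHull ℝ s) := by
  -- by Carathéodory, the hull is the union over `k ≤ finrank + 1` of images of `stdSimplex × sᵏ`
  let K (k : ℕ) : Set F := (fun p : (Fin k → ℝ) × (Fin k → F) => ∑ i, p.1 i • p.2 i) ''
    (stdSimplex ℝ (Fin k) ×ˢ univ.pi fun _ => s)
  suffices _root_.convexHull ℝ s = ⋃ k ∈ Finset.range (Module.finrank ℝ F + 2), K k by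
    rw [this]
    exact (Finset.range _).isCompact_biUnion fun k _ =>
      ((isCompact_stdSimplex _ _).prod (isCompact_univ_pi fun _ => hs)).image (by fun_prop)
  apply Subset.antisymm
  · intro x hx
    obtain ⟨t, hts, hcard, hxt⟩ := exists_finset_card_le_finrank_succ_of_mem_convexHull hx
    obtain ⟨w, hw₀, hw₁, rfl⟩ := Finset.mem_convexHull'.1 hxt
    let e := t.equivFin.symm
    refine mem_biUnion (Finset.mem_range.2 (Nat.lt_succ_of_le hcard))
      ⟨(fun i => w (e i), fun i => e i),
        ⟨⟨fun i => hw₀ _ (e i).2, ?_⟩, fun i _ => hts (e i).2⟩, ?_⟩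
    · rw [e.sum_comp (fun y : t => w y), t.sum_coe_sort w, hw₁]
    · exact (e.sum_comp (fun y : t => w y • (y : F))).trans (t.sum_coe_sort fun y => w y • y)
  · simp only [iUnion_subset_iff]
    rintro k - _ ⟨⟨w, z⟩, ⟨hw, hz⟩, rfl⟩
    exact mem_convexHull_of_exists_fintype w z hw.1 hw.2 (fun i => hz i (mem_univ i)) rfl

end ConvexHull

section SupportingNormals

variable {E : Type*} [NormedAddCommGroup E] [InnerProductSpace ℝ E]

theorem exists_inner_nonneg_of_zero_mem_convexHull {s : Set E}
    (h : (0 : E) ∈ convexHull ℝ s) (d : E) : ∃ u ∈ s, 0 ≤ ⟪u, d⟫ := by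
  by_contra! hneg
  have hconv : Convex ℝ {u : E | ⟪u, d⟫ < 0} :=
    convex_halfSpace_lt ⟨fun x y => inner_add_left x y d, fun a x => real_inner_smul_left x d a⟩ 0
  have h0 : ⟪(0 : E), d⟫ < 0 := convexHull_min hneg hconv h
  simp at h0

theorem exists_forall_inner_lt_of_notMem [CompleteSpace E] {C : Set E} {z : E}
    (hC : Convex ℝ C) (hCcl : IsClosed C) (hz : z ∉ C) : ∃ v, ∀ y ∈ C, ⟪v, y⟫ < ⟪v, z⟫ := by
  obtain ⟨f, s, hfC, hfz⟩ := geometric_hahn_banach_closed_point hC hCcl hz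
  refine ⟨(InnerProductSpace.toDual ℝ E).symm f, fun y hy => ?_⟩
  simp only [InnerProductSpace.toDual_symm_apply]
  exact (hfC y hy).trans hfz

theorem exists_unit_forall_inner_lt_of_notMem [CompleteSpace E] {C : Set E} {z : E}
    (hC : Convex ℝ C) (hCcl : IsClosed C) (hne : C.Nonempty) (hz : z ∉ C) :
    ∃ u, ‖u‖ = 1 ∧ ∀ y ∈ C, ⟪u, y⟫ < ⟪u, z⟫ := by
  obtain ⟨v, hv⟩ := exists_forall_inner_lt_of_notMem hC hCcl hz
  have hv0 : v ≠ 0 := by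
    rintro rfl
    obtain ⟨y, hy⟩ := hne
    simpa using hv y hy
  refine ⟨‖v‖⁻¹ • v, by simp [norm_smul, hv0], fun y hy => ?_⟩
  simp only [real_inner_smul_left]
  exact mul_lt_mul_of_pos_left (hv y hy) (by positivity)

def supportingNormals (C : Set E) (c : E) (r : ℝ) : Set E :=
  {u | ‖u‖ = 1 ∧ ∀ y ∈ C, ⟪u, y - c⟫ ≤ r}

theorem isCompact_supportingNormals [FiniteDimensional ℝ E] (C : Set E) (c : E) (r : ℝ) :
    IsCompact (supportingNormals C c r) := by
  have hclosed : IsClosed (supportingNormals C c r) := by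
    have : supportingNormals C c r = sphere 0 1 ∩ ⋂ y ∈ C, {u | ⟪u, y - c⟫ ≤ r} := by
      ext u; simp [supportingNormals]
    rw [this]
    exact isClosed_sphere.inter <| isClosed_biInter fun y _ =>
      isClosed_le (continuous_id.inner continuous_const) continuous_const
  exact (isCompact_sphere 0 1).of_isClosed_subset hclosed fun u hu => by simpa using hu.1

variable [FiniteDimensional ℝ E] [Nontrivial E] {C : Set E} {c : E} {r : ℝ}

theorem IsLargestInscribedBall.exists_unit_forall_inner_sub_lt
    (h : IsLargestInscribedBall C c r) (hCc : IsCompact C) (hCconv : Convex ℝ C) (p : E)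
    {ε : ℝ} (hε : 0 < ε) :
    ∃ u, ‖u‖ = 1 ∧ ∀ y ∈ C, ⟪u, y - p⟫ < r + ε := by
  obtain ⟨z, hzC, hpz⟩ := (infDist_lt_iff (nonempty_compl.2 hCc.ne_univ)).1
    ((h.infDist_compl_le hCc.isClosed p).trans_lt (lt_add_of_pos_right r hε))
  obtain ⟨u, hu, huC⟩ := exists_unit_forall_inner_lt_of_notMem hCconv hCc.isClosed
    ⟨c, h.1 (mem_closedBall_self h.nonneg)⟩ hzC
  refine ⟨u, hu, fun y hy => ?_⟩
  calc ⟪u, y - p⟫ < ⟪u, z - p⟫ := by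
        simpa only [inner_sub_right, sub_lt_sub_iff_right] using huC y hy
    _ ≤ ‖u‖ * ‖z - p‖ := real_inner_le_norm _ _
    _ < r + ε := by rwa [hu, one_mul, ← dist_eq_norm, dist_comm]

theorem IsLargestInscribedBall.exists_unit_almost_supporting
    (h : IsLargestInscribedBall C c r) (hCc : IsCompact C) (hCconv : Convex ℝ C) (v : E)
    {t : ℝ} (ht : 0 < t) :
    ∃ u, ‖u‖ = 1 ∧ (∀ y ∈ C, ⟪u, y - c⟫ ≤ r + t * (t + ‖v‖)) ∧ -t ≤ ⟪u, v⟫ := by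
  obtain ⟨u, hu, huC⟩ :=
    h.exists_unit_forall_inner_sub_lt hCc hCconv (c + t • v) (pow_pos ht 2)
  have hshift : ∀ y, ⟪u, y - (c + t • v)⟫ = ⟪u, y - c⟫ - t * ⟪u, v⟫ := fun y => by
    rw [sub_add_eq_sub_sub, inner_sub_right, real_inner_smul_right]
  have huv : ⟪u, v⟫ ≤ ‖v‖ := by simpa [hu] using real_inner_le_norm u v
  have htouch : ⟪u, c + r • u - c⟫ = r := by simp [real_inner_smul_right, hu]
  have hmem : c + r • u ∈ C := h.1 (by simp [norm_smul, hu, abs_of_nonneg h.nonneg])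
  refine ⟨u, hu, fun y hy => ?_, ?_⟩
  · have := huC y hy
    rw [hshift] at this
    nlinarith
  · -- the hyperplane must clear the point `c + r • u` of the ball, which forces `⟪u, v⟫ ≥ -t`
    have := huC _ hmem
    rw [hshift, htouch] at this
    nlinarith

theorem IsLargestInscribedBall.exists_mem_supportingNormals_inner_nonneg
    (h : IsLargestInscribedBall C c r) (hCc : IsCompact C) (hCconv : Convex ℝ C) (v : E) :
    ∃ u ∈ supportingNormals C c r, 0 ≤ ⟪u, v⟫ := by
  choose u hu huC huv using fun k : ℕ =>
    h.exists_unit_almost_supporting hCc hCconv v (Nat.one_div_pos_of_nat (n := k))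
  obtain ⟨u₀, hu₀, φ, hφ, hlim⟩ :=
    (isCompact_sphere (0 : E) 1).tendsto_subseq (x := u) fun k => by simpa using hu k
  have ht : Filter.Tendsto (fun k => 1 / ((φ k : ℝ) + 1)) Filter.atTop (nhds 0) :=
    tendsto_one_div_add_atTop_nhds_zero_nat.comp hφ.tendsto_atTop
  refine ⟨u₀, ⟨by simpa using hu₀, fun y hy => ?_⟩, ?_⟩
  · refine le_of_tendsto_of_tendsto' (hlim.inner tendsto_const_nhds) ?_ fun k => huC (φ k) y hy
    simpa using tendsto_const_nhds.add (ht.mul (ht.add tendsto_const_nhds))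
  · exact le_of_tendsto_of_tendsto' (by simpa using ht.neg) (hlim.inner tendsto_const_nhds)
      fun k => huv (φ k)

theorem IsLargestInscribedBall.zero_mem_convexHull_supportingNormals
    (h : IsLargestInscribedBall C c r) (hCc : IsCompact C) (hCconv : Convex ℝ C) :
    (0 : E) ∈ convexHull ℝ (supportingNormals C c r) := by
  by_contra h0
  obtain ⟨v, hv⟩ := exists_forall_inner_lt_of_notMem (convex_convexHull ℝ _)
    (isCompact_supportingNormals C c r).convexHull.isClosed h0
  obtain ⟨u, hu, huv⟩ := h.exists_mem_supportingNormals_inner_nonneg hCc hCconv v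
  have := hv u (subset_convexHull ℝ _ hu)
  rw [inner_zero_right, real_inner_comm] at this
  linarith

theorem IsLargestInscribedBall.exists_finset_slab_cover (h : IsLargestInscribedBall C c r)
    (hCc : IsCompact C) (hCconv : Convex ℝ C) :
    ∃ t : Finset E, t.card ≤ Module.finrank ℝ E + 1 ∧ (∀ u ∈ t, ‖u‖ = 1) ∧
      ∀ y ∈ C, ∃ u ∈ t, ⟪u, y⟫ ∈ Icc ⟪u, c⟫ (⟪u, c⟫ + r) := by
  obtain ⟨t, htN, hcard, h0⟩ := exists_finset_card_le_finrank_succ_of_mem_convexHull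
    (h.zero_mem_convexHull_supportingNormals hCc hCconv)
  refine ⟨t, hcard, fun u hu => (htN hu).1, fun y hy => ?_⟩
  obtain ⟨u, hut, hu⟩ := exists_inner_nonneg_of_zero_mem_convexHull h0 (y - c)
  have hle := (htN hut).2 y hy
  rw [inner_sub_right] at hu hle
  exact ⟨u, hut, by linarith, by linarith⟩

end SupportingNormals

theorem volume_closedBall_inter_coord_slab_le {m : ℕ} (x : EuclideanSpace ℝ (Fin (m + 1)))
    (R a b : ℝ) :
    volume (closedBall x R ∩ {y | y 0 ∈ Icc a b}) ≤
      ENNReal.ofReal (b - a) * volume (closedBall (0 : EuclideanSpace ℝ (Fin m)) R) := by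
  let tail (y : EuclideanSpace ℝ (Fin (m + 1))) : EuclideanSpace ℝ (Fin m) :=
    WithLp.toLp 2 fun j => y ((0 : Fin (m + 1)).succAbove j)
  have hsplit : MeasurePreserving (fun y : EuclideanSpace ℝ (Fin (m + 1)) => (y 0, tail y)) :=
    ((MeasurePreserving.id volume).prod (PiLp.volume_preserving_toLp (Fin m))).comp
      ((volume_preserving_piFinSuccAbove (fun _ => ℝ) 0).comp (PiLp.volume_preserving_ofLp _))
  have hdist (y : EuclideanSpace ℝ (Fin (m + 1))) : dist (tail y) (tail x) ≤ dist y x := by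
    rw [EuclideanSpace.dist_eq, EuclideanSpace.dist_eq, Fin.sum_univ_succAbove _ 0]
    exact Real.sqrt_le_sqrt (le_add_of_nonneg_left (sq_nonneg _))
  have hsub : closedBall x R ∩ {y | y 0 ∈ Icc a b} ⊆
      (fun y => (y 0, tail y)) ⁻¹' (Icc a b ×ˢ closedBall (tail x) R) :=
    fun y ⟨hy, hy0⟩ => ⟨hy0, (hdist y).trans hy⟩
  calc _ ≤ _ := measure_mono hsub
    _ = volume (Icc a b) * volume (closedBall (tail x) R) := by
      rw [hsplit.measure_preimage
        (measurableSet_Icc.prod measurableSet_closedBall).nullMeasurableSet,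
        Measure.volume_eq_prod, Measure.prod_prod]
    _ = _ := by rw [Real.volume_Icc, Measure.addHaar_closedBall_center]

theorem volume_closedBall_inter_slab_le {E : Type*} [NormedAddCommGroup E]
    [InnerProductSpace ℝ E] [FiniteDimensional ℝ E] [MeasurableSpace E] [BorelSpace E] {m : ℕ}
    (hE : Module.finrank ℝ E = m + 1) {u : E} (hu : ‖u‖ = 1) (x : E) (R a b : ℝ) :
    volume (closedBall x R ∩ {y | ⟪u, y⟫ ∈ Icc a b}) ≤
      ENNReal.ofReal (b - a) * volume (closedBall (0 : EuclideanSpace ℝ (Fin m)) R) := by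
  have hortho : Orthonormal ℝ (({0} : Set (Fin (m + 1))).domRestrict fun _ => u) :=
    ⟨fun _ => hu, fun i j hij => absurd (Subsingleton.elim i j) hij⟩
  obtain ⟨B, hB⟩ := hortho.exists_orthonormalBasis_extension_of_card_eq (by simpa using hE)
  have hpre : closedBall x R ∩ {y | ⟪u, y⟫ ∈ Icc a b} =
      B.repr ⁻¹' (closedBall (B.repr x) R ∩ {z | z 0 ∈ Icc a b}) := by
    ext y
    simp [← hB 0 rfl, B.repr_apply_apply]
  have hmeas : MeasurableSet (closedBall (B.repr x) R ∩ {z | z 0 ∈ Icc a b}) :=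
    measurableSet_closedBall.inter (measurableSet_Icc.preimage (by fun_prop))
  rw [hpre, B.measurePreserving_repr.measure_preimage hmeas.nullMeasurableSet]
  exact volume_closedBall_inter_coord_slab_le _ R a b

theorem toReal_volume_le_of_forall_mem_slab {E : Type*} [NormedAddCommGroup E]
    [InnerProductSpace ℝ E] [FiniteDimensional ℝ E] [MeasurableSpace E] [BorelSpace E] {m : ℕ}
    (hE : Module.finrank ℝ E = m + 1) {C : Set E} {t : Finset E} {c x : E} {r R : ℝ}
    (hr : 0 ≤ r) (hR : 0 ≤ R) (hunit : ∀ u ∈ t, ‖u‖ = 1) (hsub : C ⊆ closedBall x R)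
    (hcover : ∀ y ∈ C, ∃ u ∈ t, ⟪u, y⟫ ∈ Icc ⟪u, c⟫ (⟪u, c⟫ + r)) :
    (volume C).toReal ≤
      t.card * r * (R ^ m * (volume (closedBall (0 : EuclideanSpace ℝ (Fin m)) 1)).toReal) := by
  set V := volume (closedBall (0 : EuclideanSpace ℝ (Fin m)) R)
  have hslabs : C ⊆ ⋃ u ∈ t, closedBall x R ∩ {y | ⟪u, y⟫ ∈ Icc ⟪u, c⟫ (⟪u, c⟫ + r)} :=
    fun y hy => by
      obtain ⟨u, hu, hyu⟩ := hcover y hy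
      exact mem_biUnion hu ⟨hsub hy, hyu⟩
  have hvol : volume C ≤ t.card * (ENNReal.ofReal r * V) :=
    calc volume C
        ≤ ∑ u ∈ t, volume (closedBall x R ∩ {y | ⟪u, y⟫ ∈ Icc ⟪u, c⟫ (⟪u, c⟫ + r)}) :=
          (measure_mono hslabs).trans (measure_biUnion_finset_le t _)
      _ ≤ ∑ u ∈ t, ENNReal.ofReal r * V := Finset.sum_le_sum fun u hu =>
          (volume_closedBall_inter_slab_le hE (hunit u hu) x R _ _).trans_eq
            (by rw [add_sub_cancel_left])
      _ = _ := by rw [Finset.sum_const, nsmul_eq_mul]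
  have hVfin : V ≠ ⊤ := measure_closedBall_lt_top.ne
  have hV : V.toReal = R ^ m * (volume (closedBall (0 : EuclideanSpace ℝ (Fin m)) 1)).toReal := by
    simpa [measureReal_def] using
      Measure.addHaar_real_closedBall' volume (0 : EuclideanSpace ℝ (Fin m)) hR
  calc (volume C).toReal ≤ (t.card * (ENNReal.ofReal r * V)).toReal :=
        ENNReal.toReal_mono (by finiteness) hvol
    _ = _ := by
      rw [ENNReal.toReal_mul, ENNReal.toReal_mul, ENNReal.toReal_natCast,
        ENNReal.toReal_ofReal hr, hV, mul_assoc]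

theorem volume_le_of_subset_ball_general {n : ℕ} (hn : 1 ≤ n)
    (C : Set (EuclideanSpace ℝ (Fin n)))
    (hCc : IsCompact C) (hCconv : Convex ℝ C)
    (x : EuclideanSpace ℝ (Fin n)) (R : ℝ) (hR : 0 < R)
    (hsub : C ⊆ closedBall x R) :
    (volume C).toReal ≤
      (n + 1) * (volume (closedBall (0 : EuclideanSpace ℝ (Fin (n - 1))) 1)).toReal *
        R ^ (n - 1) * inradius C := by
  obtain ⟨m, rfl⟩ := Nat.exists_eq_add_of_le' hn
  rcases C.eq_empty_or_nonempty with rfl | hne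
  · simp [inradius_empty]
  obtain ⟨c, r, hcr⟩ := exists_isLargestInscribedBall hCc hne
  obtain ⟨t, hcard, hunit, hcover⟩ := hcr.exists_finset_slab_cover hCc hCconv
  rw [finrank_euclideanSpace_fin] at hcard
  rw [hcr.inradius_eq, Nat.add_sub_cancel]
  calc _ ≤ _ := toReal_volume_le_of_forall_mem_slab finrank_euclideanSpace_fin hcr.nonneg hR.le
          hunit hsub hcover
    _ ≤ ((m + 1 + 1 : ℕ) : ℝ) * r * (R ^ m * _) := by gcongr; exact hcr.nonneg
    _ = _ := by push_cast; ring

/-- Claim 6.1: if a convex body `C ⊆ ℝⁿ` satisfies `C ⊆ x + R·B₂ⁿ`, then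
`|C| ≤ (n+1) ω_{n-1} R^{n-1} r(C)`. -/
theorem volume_le_of_subset_ball {n : ℕ} (hn : 1 ≤ n)
    (C : Set (EuclideanSpace ℝ (Fin n)))
    (hCc : IsCompact C) (hCconv : Convex ℝ C) (hCint : (interior C).Nonempty)
    (x : EuclideanSpace ℝ (Fin n)) (R : ℝ) (hR : 0 < R)
    (hsub : C ⊆ closedBall x R) :
    (volume C).toReal ≤
      (n + 1) * (volume (closedBall (0 : EuclideanSpace ℝ (Fin (n - 1))) 1)).toReal *
        R ^ (n - 1) * inradius C :=
  volume_le_of_subset_ball_general hn C hCc hCconv x R hR hsub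
end
end

section
/- Let u₁, …, uₙ be unit vectors in ℝⁿ such that the simplex conv{0, u₁, …, uₙ} has inradius at least r > 0. Then for every ℵ > 0, the intersection of strips ⋂_{i=1}^n Θ_{uᵢ,ℵ} is contained in (nℵ/r)·B₂ⁿ. -/
/-!
Since `|⟪x, uᵢ⟫|` is symmetric in `x` and `uᵢ`, a point `x` lies in every strip `Θ_{uᵢ,ℵ}` exactly
when every `uᵢ` lies in the strip `Θ_{x,ℵ}`; that strip also contains `0` and is convex, so it contains
the whole simplex. A ball of radius `ρ` inside a strip `{z : |⟪z, x⟫| ≤ ℵ}` satisfies `ρ‖x‖ ≤ ℵ`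
(push its centre by `ρ` towards `±x`), hence `r‖x‖ ≤ ℵ`, i.e. `‖x‖ ≤ ℵ/r ≤ nℵ/r`.
-/

open MeasureTheory Metric Set
open scoped Pointwise RealInnerProductSpace

noncomputable section

/-- The strip `Θ_{u,t} = {x : |⟨x,u⟩| ≤ t}`. -/
def strip {n : ℕ} (u : EuclideanSpace ℝ (Fin n)) (t : ℝ) :
    Set (EuclideanSpace ℝ (Fin n)) :=
  {x | |⟪x, u⟫| ≤ t}

theorem inner_add_mul_norm_le_of_closedBall_subset {E : Type*} [NormedAddCommGroup E]
    [InnerProductSpace ℝ E] {c v : E} {ρ t : ℝ} (hρ : 0 ≤ ρ)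
    (h : closedBall c ρ ⊆ {z | ⟪z, v⟫ ≤ t}) : ⟪c, v⟫ + ρ * ‖v‖ ≤ t := by
  rcases eq_or_ne v 0 with rfl | hv
  · simpa using h (mem_closedBall_self hρ)
  have hv' : ‖v‖ ≠ 0 := norm_ne_zero_iff.2 hv
  have hmem : c + (ρ / ‖v‖) • v ∈ closedBall c ρ := by
    rw [mem_closedBall, dist_eq_norm, add_sub_cancel_left, norm_smul,
      Real.norm_of_nonneg (by positivity), div_mul_cancel₀ _ hv']
  have hle := h hmem
  rw [mem_ofPred_eq, inner_add_left, real_inner_smul_left, real_inner_self_eq_norm_sq] at hle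
  calc ⟪c, v⟫ + ρ * ‖v‖ = ⟪c, v⟫ + ρ / ‖v‖ * ‖v‖ ^ 2 := by field_simp
    _ ≤ t := hle

@[simp]
theorem mem_strip {n : ℕ} {x v : EuclideanSpace ℝ (Fin n)} {t : ℝ} :
    x ∈ strip v t ↔ |⟪x, v⟫| ≤ t :=
  Iff.rfl

theorem convex_strip {n : ℕ} (v : EuclideanSpace ℝ (Fin n)) (t : ℝ) : Convex ℝ (strip v t) := by
  have : strip v t = innerₗ _ v ⁻¹' Icc (-t) t := by
    ext; simp [abs_le, real_inner_comm]
  rw [this]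
  exact (convex_Icc _ _).linear_preimage _

theorem mul_norm_le_of_closedBall_subset_strip {n : ℕ} {c v : EuclideanSpace ℝ (Fin n)}
    {ρ t : ℝ} (ht : 0 ≤ t) (h : closedBall c ρ ⊆ strip v t) : ρ * ‖v‖ ≤ t := by
  rcases lt_or_ge ρ 0 with hρ | hρ
  · exact (mul_nonpos_of_nonpos_of_nonneg hρ.le (norm_nonneg v)).trans ht
  have hv := inner_add_mul_norm_le_of_closedBall_subset hρ
    (h.trans fun z hz => (abs_le.1 (mem_strip.1 hz)).2)
  have hnv := inner_add_mul_norm_le_of_closedBall_subset (v := -v) (t := t) hρ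
    (h.trans fun z hz => by simpa [inner_neg_right, neg_le] using (abs_le.1 (mem_strip.1 hz)).1)
  rw [inner_neg_right, norm_neg] at hnv
  linarith

theorem inradius_mul_norm_le {n : ℕ} {C : Set (EuclideanSpace ℝ (Fin n))}
    {v : EuclideanSpace ℝ (Fin n)} {t : ℝ} (ht : 0 ≤ t) (hC : C ⊆ strip v t) :
    inradius C * ‖v‖ ≤ t := by
  rcases eq_or_ne v 0 with rfl | hv
  · simpa using ht
  have hv' : 0 < ‖v‖ := norm_pos_iff.2 hv
  rw [← le_div_iff₀ hv']
  refine Real.sSup_le ?_ (by positivity)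
  rintro ρ ⟨c, hc⟩
  exact (le_div_iff₀ hv').2 (mul_norm_le_of_closedBall_subset_strip ht (hc.trans hC))

theorem inter_strips_subset_ball_general {n : ℕ} (u : Fin n → EuclideanSpace ℝ (Fin n))
    (r : ℝ) (hr : 0 < r)
    (hinr : r ≤ inradius (convexHull ℝ (insert 0 (Set.range u))))
    (ℵ : ℝ) (hℵ : 0 < ℵ) :
    (⋂ i, strip (u i) ℵ) ⊆ closedBall 0 (n * ℵ / r) := by
  intro x hx
  rw [mem_closedBall, dist_zero_right]
  rcases Nat.eq_zero_or_pos n with rfl | hn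
  · simp [Subsingleton.elim x 0]
  have hhull : convexHull ℝ (insert 0 (range u)) ⊆ strip x ℵ := by
    refine convexHull_min (insert_subset (by simpa using hℵ.le) ?_) (convex_strip x ℵ)
    rintro _ ⟨i, rfl⟩
    simpa [real_inner_comm] using mem_iInter.1 hx i
  have hrx : r * ‖x‖ ≤ ℵ :=
    (mul_le_mul_of_nonneg_right hinr (norm_nonneg x)).trans (inradius_mul_norm_le hℵ.le hhull)
  calc ‖x‖ ≤ ℵ / r := by rw [le_div_iff₀ hr]; linarith
    _ ≤ n * ℵ / r := by gcongr; exact le_mul_of_one_le_left hℵ.le (mod_cast hn)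

/-- Inequality (6.17): if `u₁, …, uₙ` are unit vectors such that the simplex
`conv{0, u₁, …, uₙ}` has inradius at least `r > 0`, then for every `ℵ > 0`,
`⋂ᵢ Θ_{uᵢ,ℵ} ⊆ (nℵ/r)·B₂ⁿ`. -/
theorem inter_strips_subset_ball {n : ℕ} (u : Fin n → EuclideanSpace ℝ (Fin n))
    (hu : ∀ i, ‖u i‖ = 1) (r : ℝ) (hr : 0 < r)
    (hinr : r ≤ inradius (convexHull ℝ (insert 0 (Set.range u))))
    (ℵ : ℝ) (hℵ : 0 < ℵ) :
    (⋂ i, strip (u i) ℵ) ⊆ closedBall 0 (n * ℵ / r) :=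
  inter_strips_subset_ball_general u r hr hinr ℵ hℵ
end
end

section
/- For every n ≥ 2, R > 1 and s ∈ (0, 1/2) there exists a constant c ∈ (0,1) depending only on n, R, s with the following property: let Ẽ ⊆ ℝⁿ be an o-symmetric ellipsoid with (1/R²)·B₂ⁿ ⊆ Ẽ ⊆ R²·B₂ⁿ and half axes a₁ ≤ … ≤ aₙ, let σ̃ ⊆ ℝⁿ be a convex cone with r(σ̃ ∩ B₂ⁿ) ≥ s/R, and let ε ∈ (0, 1/2) satisfy max_{1 ≤ i ≤ n} |aᵢ − 1| ≥ ε. Then |(Ẽ Δ B₂ⁿ) ∩ σ̃| ≥ c·ε. -/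
/-!
Write the ellipsoid as `{x | ‖x‖² + B x x ≤ 1}` with the diagonal form
`B = ∑ᵢ (aᵢ⁻² - 1) ⟪·, bᵢ⟫²`, whose largest coefficient `Λ` is at least `ε / R⁴`. Since the
second difference of `t ↦ B (x + t e) (x + t e)` is `2 t² B e e`, every ball of radius `ρ` in the
cone contains a point where `|B| ≥ ρ² Λ / 8`, hence a ball of radius `ρ² / 48` on which `B` has a
fixed sign and `|B| ≥ ρ² Λ / 16`. Where `B x x ≥ κ ‖x‖²` on a cone, the part of the cone in the
shell `1 - κ/4 < ‖x‖ ≤ 1` lies outside the ellipsoid (where `B x x ≤ -κ ‖x‖²`, the part in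
`1 < ‖x‖ ≤ 1 + κ/4` lies inside it); as Haar measure scales like `rᵈ` on cones, that part has
measure at least `κ / 4` times the measure of the small ball.
-/

open MeasureTheory Metric Set
open scoped Pointwise symmDiff RealInnerProductSpace

noncomputable section

/-- A convex cone: a convex set closed under multiplication by nonnegative scalars. -/
def IsConvexCone {n : ℕ} (σ : Set (EuclideanSpace ℝ (Fin n))) : Prop :=
  Convex ℝ σ ∧ ∀ c : ℝ, 0 ≤ c → ∀ x ∈ σ, c • x ∈ σ

theorem one_lt_sq_add_of_mul_sq_le {κ r p : ℝ} (hκ0 : 0 < κ) (hκ1 : κ ≤ 1)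
    (hp : κ * r ^ 2 ≤ p) (hr : 1 - κ / 4 < r) : 1 < r ^ 2 + p := by
  have hr2 : (1 - κ / 4) ^ 2 < r ^ 2 := by gcongr; linarith
  have hκ : 1 ≤ (1 + κ) * (1 - κ / 4) ^ 2 := by
    nlinarith [mul_nonneg hκ0.le (sub_nonneg.2 hκ1), pow_pos hκ0 3]
  nlinarith [mul_lt_mul_of_pos_left hr2 (by linarith : 0 < 1 + κ)]

theorem sq_add_le_one_of_mul_sq_le_neg {κ r p : ℝ} (hκ0 : 0 ≤ κ) (hκ1 : κ ≤ 1)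
    (hp : κ * r ^ 2 ≤ -p) (hr0 : 0 ≤ r) (hr : r ≤ 1 + κ / 4) : r ^ 2 + p ≤ 1 := by
  have hr2 : r ^ 2 ≤ (1 + κ / 4) ^ 2 := by gcongr
  have hκ : (1 - κ) * (1 + κ / 4) ^ 2 ≤ 1 := by nlinarith [pow_nonneg hκ0 3]
  nlinarith [mul_le_mul_of_nonneg_left hr2 (by linarith : 0 ≤ 1 - κ)]

theorem div_le_abs_inv_sq_sub_one {a R ε : ℝ} (ha : 0 < a) (haR : a ≤ R ^ 2)
    (hε : ε ≤ |a - 1|) : ε / R ^ 4 ≤ |(a ^ 2)⁻¹ - 1| := by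
  have hfactor : (a ^ 2)⁻¹ - 1 = (1 - a) * (1 + a) / a ^ 2 := by field_simp; ring
  rw [hfactor, abs_div, abs_mul, abs_of_pos (by positivity : 0 < 1 + a), abs_sub_comm,
    abs_of_pos (by positivity : 0 < a ^ 2)]
  apply div_le_div₀ (by positivity) _ (by positivity)
  · nlinarith
  · nlinarith [abs_nonneg (a - 1)]

theorem smul_set_eq_of_smul_mem {E : Type*} [AddCommGroup E] [Module ℝ E] {S : Set E}
    (hS : ∀ r : ℝ, 0 < r → ∀ x ∈ S, r • x ∈ S) {r : ℝ} (hr : 0 < r) : r • S = S := by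
  refine (smul_set_subset_iff.2 fun x hx => hS r hr x hx).antisymm fun x hx => ?_
  exact ⟨r⁻¹ • x, hS _ (inv_pos.2 hr) x hx, smul_inv_smul₀ hr.ne' x⟩

section Shell

variable {E : Type*} [NormedAddCommGroup E] [NormedSpace ℝ E] [FiniteDimensional ℝ E]
  [MeasurableSpace E] [BorelSpace E] (μ : Measure E) [μ.IsAddHaarMeasure] {S : Set E}

theorem measure_inter_closedBall_eq_of_smul_mem (hS : ∀ r : ℝ, 0 < r → ∀ x ∈ S, r • x ∈ S)
    {r : ℝ} (hr : 0 < r) :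
    μ (S ∩ closedBall 0 r) =
      ENNReal.ofReal (r ^ Module.finrank ℝ E) * μ (S ∩ closedBall 0 1) := by
  have hscale : S ∩ closedBall 0 r = r • (S ∩ closedBall (0 : E) 1) := by
    rw [smul_set_inter₀ hr.ne', smul_set_eq_of_smul_mem hS hr,
      _root_.smul_closedBall _ _ zero_le_one, smul_zero, Real.norm_eq_abs, abs_of_pos hr, mul_one]
  rw [hscale, Measure.addHaar_smul_of_nonneg μ hr.le]

theorem le_measure_shell_of_smul_mem (hS : ∀ r : ℝ, 0 < r → ∀ x ∈ S, r • x ∈ S)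
    {r₁ r₂ : ℝ} (hr₁ : 0 < r₁) (hr₂ : 0 < r₂) :
    ENNReal.ofReal (r₂ ^ Module.finrank ℝ E - r₁ ^ Module.finrank ℝ E) *
        μ (S ∩ closedBall 0 1) ≤ μ ((S ∩ closedBall 0 r₂) \ closedBall 0 r₁) := by
  have hfin : μ (S ∩ closedBall 0 1) ≠ ⊤ :=
    ne_top_of_le_ne_top measure_closedBall_lt_top.ne (measure_mono inter_subset_right)
  rw [ENNReal.ofReal_sub _ (by positivity), ENNReal.sub_mul fun _ _ => hfin,
    ← measure_inter_closedBall_eq_of_smul_mem μ hS hr₁,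
    ← measure_inter_closedBall_eq_of_smul_mem μ hS hr₂, tsub_le_iff_right]
  calc μ (S ∩ closedBall 0 r₂)
      ≤ μ (((S ∩ closedBall 0 r₂) \ closedBall 0 r₁) ∪ S ∩ closedBall 0 r₁) :=
        measure_mono fun x hx => by by_cases h : x ∈ closedBall (0 : E) r₁ <;> simp_all
    _ ≤ _ := measure_union_le _ _

end Shell

namespace LinearMap.BilinForm

section Normed

variable {E : Type*} [NormedAddCommGroup E] [NormedSpace ℝ E] (B : LinearMap.BilinForm ℝ E)

theorem exists_norm_sub_le_abs_apply_self_ge (x e : E) {t : ℝ} (ht : 0 ≤ t) :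
    ∃ y, ‖y - x‖ ≤ t * ‖e‖ ∧ t ^ 2 * |B e e| / 2 ≤ |B y y| := by
  have second_difference : B (x + t • e) (x + t • e) + B (x - t • e) (x - t • e) - 2 * B x x =
      2 * t ^ 2 * B e e := by
    simp only [map_add, map_sub, map_smul, LinearMap.add_apply, LinearMap.sub_apply,
      LinearMap.smul_apply, smul_eq_mul]
    ring
  by_contra! h
  have hp := h (x + t • e) (by simp [norm_smul, abs_of_nonneg ht])
  have hm := h (x - t • e) (by simp [norm_smul, abs_of_nonneg ht])
  have h0 := h x (by simp; positivity)
  rcases abs_cases (B e e) with ⟨he, -⟩ | ⟨he, -⟩ <;> rw [he] at hp hm h0 <;>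
    linarith [abs_lt.1 hp, abs_lt.1 hm, abs_lt.1 h0]

variable {B} {Λ : ℝ}

theorem abs_apply_self_sub_apply_self_le (hB : ∀ x y, |B x y| ≤ Λ * ‖x‖ * ‖y‖) (y z : E) :
    |B z z - B y y| ≤ Λ * (‖z‖ + ‖y‖) * ‖z - y‖ := by
  have hsplit : B z z - B y y = B z (z - y) + B (z - y) y := by
    simp only [map_sub, LinearMap.sub_apply]
    ring
  calc |B z z - B y y| ≤ |B z (z - y)| + |B (z - y) y| := hsplit ▸ abs_add_le _ _
    _ ≤ Λ * ‖z‖ * ‖z - y‖ + Λ * ‖z - y‖ * ‖y‖ := add_le_add (hB _ _) (hB _ _)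
    _ = Λ * (‖z‖ + ‖y‖) * ‖z - y‖ := by ring

theorem exists_closedBall_subset_sign_definite (hB : ∀ x y, |B x y| ≤ Λ * ‖x‖ * ‖y‖)
    {e : E} (he : ‖e‖ = 1) (hΛ : Λ ≤ |B e e|) {x₀ : E} (hx₀ : ‖x₀‖ ≤ 1) {ρ κ : ℝ}
    (hρ0 : 0 < ρ) (hρ1 : ρ ≤ 1 / 2) (hκ : κ ≤ ρ ^ 2 * Λ / 16) :
    ∃ y, closedBall y (ρ ^ 2 / 48) ⊆ closedBall x₀ ρ ∧
      ((∀ z ∈ closedBall y (ρ ^ 2 / 48), κ ≤ B z z) ∨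
        ∀ z ∈ closedBall y (ρ ^ 2 / 48), κ ≤ -B z z) := by
  have hΛ0 : 0 ≤ Λ := by simpa [he] using (abs_nonneg _).trans (hB e e)
  obtain ⟨y, hyx₀, hyy⟩ := B.exists_norm_sub_le_abs_apply_self_ge x₀ e (t := ρ / 2) (by positivity)
  rw [he, mul_one] at hyx₀
  have hyy : ρ ^ 2 * Λ / 8 ≤ |B y y| :=
    calc ρ ^ 2 * Λ / 8 = (ρ / 2) ^ 2 * Λ / 2 := by ring
      _ ≤ (ρ / 2) ^ 2 * |B e e| / 2 := by gcongr
      _ ≤ |B y y| := hyy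
  have hnear : ∀ z ∈ closedBall y (ρ ^ 2 / 48), |B z z - B y y| ≤ ρ ^ 2 * Λ / 16 := by
    intro z hz
    rw [mem_closedBall, dist_eq_norm] at hz
    have hy : ‖y‖ ≤ 5 / 4 := by linarith [norm_le_norm_add_norm_sub' y x₀]
    have hz' : ‖z‖ ≤ 7 / 4 := by nlinarith [norm_le_norm_add_norm_sub' z y]
    calc |B z z - B y y| ≤ Λ * (‖z‖ + ‖y‖) * ‖z - y‖ := abs_apply_self_sub_apply_self_le hB y z
      _ ≤ Λ * 3 * (ρ ^ 2 / 48) := by gcongr; linarith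
      _ = ρ ^ 2 * Λ / 16 := by ring
  refine ⟨y, closedBall_subset_closedBall' (by rw [dist_eq_norm]; nlinarith), ?_⟩
  rcases le_or_gt 0 (B y y) with hy | hy
  · rw [abs_of_nonneg hy] at hyy
    exact Or.inl fun z hz => by linarith [abs_le.1 (hnear z hz)]
  · rw [abs_of_neg hy] at hyy
    exact Or.inr fun z hz => by linarith [abs_le.1 (hnear z hz)]

variable (B) {σ D : Set E} {κ : ℝ}

theorem smul_mem_setOf_mul_sq_le (hσ : ∀ c : ℝ, 0 ≤ c → ∀ x ∈ σ, c • x ∈ σ) :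
    ∀ r : ℝ, 0 < r → ∀ x ∈ {x | x ∈ σ ∧ κ * ‖x‖ ^ 2 ≤ B x x},
      r • x ∈ {x | x ∈ σ ∧ κ * ‖x‖ ^ 2 ≤ B x x} := by
  rintro r hr x ⟨hxσ, hx⟩
  refine ⟨hσ r hr.le x hxσ, ?_⟩
  simp only [map_smul, LinearMap.smul_apply, smul_eq_mul, norm_smul, Real.norm_eq_abs,
    abs_of_pos hr]
  nlinarith [mul_le_mul_of_nonneg_left hx (sq_nonneg r)]

theorem subset_setOf_mul_sq_le_inter (hκ : 0 ≤ κ) (hD : D ⊆ σ ∩ closedBall 0 1)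
    (hDκ : ∀ z ∈ D, κ ≤ B z z) :
    D ⊆ {x | x ∈ σ ∧ κ * ‖x‖ ^ 2 ≤ B x x} ∩ closedBall 0 1 := by
  refine fun z hz => ⟨⟨(hD hz).1, ?_⟩, (hD hz).2⟩
  have hz1 : ‖z‖ ≤ 1 := mem_closedBall_zero_iff.1 (hD hz).2
  calc κ * ‖z‖ ^ 2 ≤ κ * 1 := by gcongr; exact pow_le_one₀ (norm_nonneg z) hz1
    _ ≤ B z z := by linarith [hDκ z hz]

end Normed

section Volume

variable {E : Type*} [NormedAddCommGroup E] [NormedSpace ℝ E] [FiniteDimensional ℝ E]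
  [MeasurableSpace E] [BorelSpace E] [Nontrivial E] (μ : Measure E) [μ.IsAddHaarMeasure]
  (B : LinearMap.BilinForm ℝ E) {σ D : Set E} {κ : ℝ}

theorem le_measure_closedBall_diff_inter (hσ : ∀ c : ℝ, 0 ≤ c → ∀ x ∈ σ, c • x ∈ σ)
    (hκ0 : 0 < κ) (hκ1 : κ ≤ 1) (hD : D ⊆ σ ∩ closedBall 0 1) (hDκ : ∀ z ∈ D, κ ≤ B z z) :
    ENNReal.ofReal (κ / 4) * μ D ≤ μ ((closedBall 0 1 \ {x | ‖x‖ ^ 2 + B x x ≤ 1}) ∩ σ) := by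
  set d := Module.finrank ℝ E
  have hd : (1 - κ / 4) ^ d ≤ 1 - κ / 4 :=
    pow_le_of_le_one (by linarith) (by linarith) Module.finrank_pos.ne'
  calc ENNReal.ofReal (κ / 4) * μ D
      ≤ ENNReal.ofReal (1 ^ d - (1 - κ / 4) ^ d) *
          μ ({x | x ∈ σ ∧ κ * ‖x‖ ^ 2 ≤ B x x} ∩ closedBall 0 1) := by
        gcongr
        · rw [one_pow]; linarith
        · exact B.subset_setOf_mul_sq_le_inter hκ0.le hD hDκ
    _ ≤ μ (({x | x ∈ σ ∧ κ * ‖x‖ ^ 2 ≤ B x x} ∩ closedBall 0 1) \ closedBall 0 (1 - κ / 4)) :=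
        le_measure_shell_of_smul_mem μ (B.smul_mem_setOf_mul_sq_le hσ) (by linarith) one_pos
    _ ≤ _ := by
        refine measure_mono fun x ⟨⟨⟨hxσ, hx⟩, hx1⟩, hxr⟩ => ⟨⟨hx1, ?_⟩, hxσ⟩
        rw [mem_closedBall_zero_iff, not_le] at hxr
        exact (one_lt_sq_add_of_mul_sq_le hκ0 hκ1 hx hxr).not_ge

theorem le_measure_diff_closedBall_inter (hσ : ∀ c : ℝ, 0 ≤ c → ∀ x ∈ σ, c • x ∈ σ)
    (hκ0 : 0 < κ) (hκ1 : κ ≤ 1) (hD : D ⊆ σ ∩ closedBall 0 1) (hDκ : ∀ z ∈ D, κ ≤ -B z z) :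
    ENNReal.ofReal (κ / 4) * μ D ≤ μ (({x | ‖x‖ ^ 2 + B x x ≤ 1} \ closedBall 0 1) ∩ σ) := by
  set d := Module.finrank ℝ E
  have hd : 1 + κ / 4 ≤ (1 + κ / 4) ^ d := le_self_pow₀ (by linarith) Module.finrank_pos.ne'
  calc ENNReal.ofReal (κ / 4) * μ D
      ≤ ENNReal.ofReal ((1 + κ / 4) ^ d - 1 ^ d) *
          μ ({x | x ∈ σ ∧ κ * ‖x‖ ^ 2 ≤ (-B) x x} ∩ closedBall 0 1) := by
        gcongr
        · rw [one_pow]; linarith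
        · exact (-B).subset_setOf_mul_sq_le_inter hκ0.le hD hDκ
    _ ≤ μ (({x | x ∈ σ ∧ κ * ‖x‖ ^ 2 ≤ (-B) x x} ∩ closedBall 0 (1 + κ / 4)) \
          closedBall 0 1) :=
        le_measure_shell_of_smul_mem μ ((-B).smul_mem_setOf_mul_sq_le hσ) one_pos (by linarith)
    _ ≤ _ := by
        refine measure_mono fun x ⟨⟨⟨hxσ, hx⟩, hxr⟩, hx1⟩ => ⟨⟨?_, hx1⟩, hxσ⟩
        exact sq_add_le_one_of_mul_sq_le_neg hκ0.le hκ1 hx (norm_nonneg x)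
          (mem_closedBall_zero_iff.1 hxr)

theorem le_measure_symmDiff_closedBall_inter {Λ : ℝ} (hB : ∀ x y, |B x y| ≤ Λ * ‖x‖ * ‖y‖)
    {e : E} (he : ‖e‖ = 1) (hΛ : Λ ≤ |B e e|) (hσ : ∀ c : ℝ, 0 ≤ c → ∀ x ∈ σ, c • x ∈ σ)
    {x₀ : E} {ρ : ℝ} (hx₀ : closedBall x₀ ρ ⊆ σ ∩ closedBall 0 1) (hρ0 : 0 < ρ)
    (hρ1 : ρ ≤ 1 / 2) (hκ0 : 0 < κ) (hκ1 : κ ≤ 1) (hκ : κ ≤ ρ ^ 2 * Λ / 16) :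
    ENNReal.ofReal (κ / 4) * μ (closedBall 0 (ρ ^ 2 / 48)) ≤
      μ (({x | ‖x‖ ^ 2 + B x x ≤ 1} ∆ closedBall 0 1) ∩ σ) := by
  obtain ⟨y, hyx₀, hy⟩ := B.exists_closedBall_subset_sign_definite hB he hΛ
    (mem_closedBall_zero_iff.1 (hx₀ (mem_closedBall_self hρ0.le)).2) hρ0 hρ1 hκ
  rw [← Measure.addHaar_closedBall_center μ y]
  rcases hy with hy | hy
  · refine (B.le_measure_closedBall_diff_inter μ hσ hκ0 hκ1 (hyx₀.trans hx₀) hy).trans ?_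
    exact measure_mono (inter_subset_inter_left _ le_sup_right)
  · refine (B.le_measure_diff_closedBall_inter μ hσ hκ0 hκ1 (hyx₀.trans hx₀) hy).trans ?_
    exact measure_mono (inter_subset_inter_left _ le_sup_left)

end Volume

end LinearMap.BilinForm

section DiagForm

variable {ι E : Type*} [Fintype ι] [NormedAddCommGroup E] [InnerProductSpace ℝ E]
  (b : OrthonormalBasis ι ℝ E)

def diagForm (lam : ι → ℝ) : LinearMap.BilinForm ℝ E :=
  ∑ i, lam i • LinearMap.BilinForm.linMulLin (innerₛₗ ℝ (b i)) (innerₛₗ ℝ (b i))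

theorem diagForm_apply (lam : ι → ℝ) (x y : E) :
    diagForm b lam x y = ∑ i, lam i * (⟪b i, x⟫ * ⟪b i, y⟫) := by
  simp [diagForm, LinearMap.sum_apply]

theorem diagForm_apply_basis (lam : ι → ℝ) (j : ι) : diagForm b lam (b j) (b j) = lam j := by
  classical
  simp [diagForm_apply, orthonormal_iff_ite.1 b.orthonormal]

theorem abs_diagForm_le [Nonempty ι] {lam : ι → ℝ} {Λ : ℝ} (hΛ : ∀ i, |lam i| ≤ Λ) (x y : E) :
    |diagForm b lam x y| ≤ Λ * ‖x‖ * ‖y‖ := by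
  have hΛ0 : 0 ≤ Λ := (abs_nonneg _).trans (hΛ (Classical.arbitrary ι))
  have hnorm (x : E) : √(∑ i, |⟪b i, x⟫| ^ 2) = ‖x‖ := by
    simp_rw [← Real.norm_eq_abs, b.sum_sq_norm_inner_right, Real.sqrt_sq (norm_nonneg x)]
  calc |diagForm b lam x y| ≤ ∑ i, Λ * (|⟪b i, x⟫| * |⟪b i, y⟫|) := by
        rw [diagForm_apply]
        refine (Finset.abs_sum_le_sum_abs _ _).trans (Finset.sum_le_sum fun i _ => ?_)
        rw [abs_mul, abs_mul]
        gcongr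
        exact hΛ i
    _ ≤ Λ * ‖x‖ * ‖y‖ := by
        rw [← Finset.mul_sum, mul_assoc, ← hnorm x, ← hnorm y]
        gcongr
        exact Real.sum_mul_le_sqrt_mul_sqrt _ _ _

variable {a : ι → ℝ}

theorem setOf_sum_inner_sq_div_sq_le_one_eq (ha : ∀ i, a i ≠ 0) :
    {x : E | ∑ i, ⟪x, b i⟫ ^ 2 / a i ^ 2 ≤ 1} =
      {x | ‖x‖ ^ 2 + diagForm b (fun i => (a i ^ 2)⁻¹ - 1) x x ≤ 1} := by
  have hsum (x : E) : ∑ i, ⟪x, b i⟫ ^ 2 / a i ^ 2 =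
      ‖x‖ ^ 2 + diagForm b (fun i => (a i ^ 2)⁻¹ - 1) x x := by
    rw [diagForm_apply, ← b.sum_sq_norm_inner_right, ← Finset.sum_add_distrib]
    refine Finset.sum_congr rfl fun i _ => ?_
    rw [real_inner_comm, Real.norm_eq_abs, sq_abs]
    field_simp [ha i]
    ring
  simp_rw [hsum]

theorem abs_le_of_setOf_sum_inner_sq_div_sq_le_one_subset {r : ℝ}
    (h : {x : E | ∑ i, ⟪x, b i⟫ ^ 2 / a i ^ 2 ≤ 1} ⊆ closedBall 0 r) {j : ι} (hj : a j ≠ 0) :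
    |a j| ≤ r := by
  classical
  have hmem : a j • b j ∈ {x : E | ∑ i, ⟪x, b i⟫ ^ 2 / a i ^ 2 ≤ 1} := by
    simp [real_inner_smul_left, orthonormal_iff_ite.1 b.orthonormal, ite_div, hj]
  simpa [norm_smul] using h hmem

theorem le_measure_ellipsoid_symmDiff_closedBall_inter [FiniteDimensional ℝ E]
    [MeasurableSpace E] [BorelSpace E] (μ : Measure E) [μ.IsAddHaarMeasure]
    (ha : ∀ i, 0 < a i) {R : ℝ} (hR : 1 ≤ R)
    (hE : {x : E | ∑ i, ⟪x, b i⟫ ^ 2 / a i ^ 2 ≤ 1} ⊆ closedBall 0 (R ^ 2))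
    {ε : ℝ} (hε0 : 0 < ε) (hε1 : ε ≤ 1) {j : ι} (hj : ε ≤ |a j - 1|)
    {σ : Set E} (hσ : ∀ c : ℝ, 0 ≤ c → ∀ x ∈ σ, c • x ∈ σ) {x₀ : E} {ρ : ℝ}
    (hx₀ : closedBall x₀ ρ ⊆ σ ∩ closedBall 0 1) (hρ0 : 0 < ρ) (hρ1 : ρ ≤ 1 / 2) :
    ENNReal.ofReal (ρ ^ 2 * ε / (64 * R ^ 4)) * μ (closedBall 0 (ρ ^ 2 / 48)) ≤
      μ (({x : E | ∑ i, ⟪x, b i⟫ ^ 2 / a i ^ 2 ≤ 1} ∆ closedBall 0 1) ∩ σ) := by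
  have : Nonempty ι := ⟨j⟩
  have : Nontrivial E := nontrivial_of_ne _ _ (b.orthonormal.ne_zero j)
  obtain ⟨k, hk⟩ := Finite.exists_max fun i => |(a i ^ 2)⁻¹ - 1|
  have haj : a j ≤ R ^ 2 :=
    (le_abs_self _).trans (abs_le_of_setOf_sum_inner_sq_div_sq_le_one_subset b hE (ha j).ne')
  have hak : ε / R ^ 4 ≤ |(a k ^ 2)⁻¹ - 1| :=
    (div_le_abs_inv_sq_sub_one (ha j) haj hj).trans (hk j)
  have hκ1 : ρ ^ 2 * ε / (16 * R ^ 4) ≤ 1 := by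
    rw [div_le_one (by positivity)]
    nlinarith [one_le_pow₀ (n := 4) hR, mul_pos hρ0 hε0]
  have hκ : ρ ^ 2 * ε / (16 * R ^ 4) ≤ ρ ^ 2 * |(a k ^ 2)⁻¹ - 1| / 16 :=
    calc ρ ^ 2 * ε / (16 * R ^ 4) = ρ ^ 2 * (ε / R ^ 4) / 16 := by ring
      _ ≤ _ := by gcongr
  have h := (diagForm b _).le_measure_symmDiff_closedBall_inter μ (abs_diagForm_le b hk)
    (b.orthonormal.1 k) (by rw [diagForm_apply_basis]) hσ hx₀ hρ0 hρ1 (by positivity) hκ1 hκ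
  rwa [setOf_sum_inner_sq_div_sq_le_one_eq b fun i => (ha i).ne',
    show ρ ^ 2 * ε / (64 * R ^ 4) = ρ ^ 2 * ε / (16 * R ^ 4) / 4 by ring]

end DiagForm

theorem exists_closedBall_subset_of_lt_inradius {n : ℕ} {C : Set (EuclideanSpace ℝ (Fin n))}
    {r : ℝ} (hr : r < inradius C) : ∃ x, closedBall x r ⊆ C := by
  have hne : {r : ℝ | ∃ x : EuclideanSpace ℝ (Fin n), closedBall x r ⊆ C}.Nonempty :=
    ⟨-1, 0, by simp⟩
  obtain ⟨r', ⟨x, hx⟩, hrr'⟩ := exists_lt_of_lt_csSup hne hr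
  exact ⟨x, (closedBall_subset_closedBall hrr'.le).trans hx⟩

theorem ellipsoid_far_from_ball_on_cone_general (n : ℕ) (R s : ℝ)
    (hR : 1 < R) (hs : s ∈ Set.Ioo (0 : ℝ) (1 / 2)) :
    ∃ c : ℝ, c ∈ Set.Ioo (0 : ℝ) 1 ∧
      ∀ (a : Fin n → ℝ) (b : OrthonormalBasis (Fin n) ℝ (EuclideanSpace ℝ (Fin n)))
        (Etil σ' : Set (EuclideanSpace ℝ (Fin n))) (ε : ℝ),
        (∀ i, 0 < a i) → Monotone a →
        Etil = {x : EuclideanSpace ℝ (Fin n) | ∑ i, ⟪x, b i⟫ ^ 2 / (a i) ^ 2 ≤ 1} →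
        closedBall (0 : EuclideanSpace ℝ (Fin n)) (1 / R ^ 2) ⊆ Etil →
        Etil ⊆ closedBall 0 (R ^ 2) →
        IsConvexCone σ' → s / R ≤ inradius (σ' ∩ closedBall 0 1) →
        ε ∈ Set.Ioo (0 : ℝ) (1 / 2) → (∃ i, ε ≤ |a i - 1|) →
        c * ε ≤ (volume ((Etil ∆ closedBall 0 1) ∩ σ')).toReal := by
  obtain ⟨hs0, hs1⟩ := hs
  have hR0 : 0 < R := one_pos.trans hR
  set ρ := s / (2 * R)
  have hρ0 : 0 < ρ := by positivity
  have hρ1 : ρ ≤ 1 / 2 := by rw [div_le_iff₀ (by positivity)]; nlinarith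
  set V := (volume (closedBall (0 : EuclideanSpace ℝ (Fin n)) (ρ ^ 2 / 48))).toReal
  have hV : 0 < V := ENNReal.toReal_pos (measure_closedBall_pos _ _ (by positivity)).ne'
    measure_closedBall_lt_top.ne
  refine ⟨min (1 / 2) (ρ ^ 2 / (64 * R ^ 4) * V),
    ⟨by positivity, min_lt_of_left_lt (by norm_num)⟩, ?_⟩
  rintro a b Etil σ' ε ha - rfl - hE hσ hinr ⟨hε0, hε1⟩ ⟨j, hj⟩
  obtain ⟨x₀, hx₀⟩ := exists_closedBall_subset_of_lt_inradius
    ((div_lt_div_of_pos_left hs0 hR0 (by linarith) : ρ < s / R).trans_le hinr)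
  have hfin : volume (({x | ∑ i, ⟪x, b i⟫ ^ 2 / a i ^ 2 ≤ 1} ∆ closedBall 0 1) ∩ σ') ≠ ⊤ :=
    (((isBounded_closedBall.subset hE).union isBounded_closedBall).subset
      (inter_subset_left.trans symmDiff_subset_union)).measure_lt_top.ne
  calc min (1 / 2) (ρ ^ 2 / (64 * R ^ 4) * V) * ε ≤ ρ ^ 2 / (64 * R ^ 4) * V * ε := by
        gcongr; exact min_le_right _ _
    _ = (ENNReal.ofReal (ρ ^ 2 * ε / (64 * R ^ 4)) *
          volume (closedBall (0 : EuclideanSpace ℝ (Fin n)) (ρ ^ 2 / 48))).toReal := by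
        rw [ENNReal.toReal_mul, ENNReal.toReal_ofReal (by positivity)]; ring
    _ ≤ _ := ENNReal.toReal_mono hfin <| le_measure_ellipsoid_symmDiff_closedBall_inter b volume
        ha hR.le hE hε0 (by linarith) hj hσ.2 hx₀ hρ0 hρ1

/-- Core claim (6.5) in the proof of Lemma 6.2: if an o-symmetric ellipsoid `Etil`
with half axes `a₁ ≤ … ≤ aₙ` (expressed in a suitable orthonormal basis) is
sandwiched between `(1/R²)·B₂ⁿ` and `R²·B₂ⁿ`, `σ̃` is a convex cone with
`r(σ̃ ∩ B₂ⁿ) ≥ s/R`, and `max |aᵢ − 1| ≥ ε` for some `ε ∈ (0,1/2)`, then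
`|(Etil Δ B₂ⁿ) ∩ σ̃| ≥ c·ε`. -/
theorem ellipsoid_far_from_ball_on_cone (n : ℕ) (hn : 2 ≤ n) (R s : ℝ)
    (hR : 1 < R) (hs : s ∈ Set.Ioo (0 : ℝ) (1 / 2)) :
    ∃ c : ℝ, c ∈ Set.Ioo (0 : ℝ) 1 ∧
      ∀ (a : Fin n → ℝ) (b : OrthonormalBasis (Fin n) ℝ (EuclideanSpace ℝ (Fin n)))
        (Etil σ' : Set (EuclideanSpace ℝ (Fin n))) (ε : ℝ),
        (∀ i, 0 < a i) → Monotone a →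
        Etil = {x : EuclideanSpace ℝ (Fin n) | ∑ i, ⟪x, b i⟫ ^ 2 / (a i) ^ 2 ≤ 1} →
        closedBall (0 : EuclideanSpace ℝ (Fin n)) (1 / R ^ 2) ⊆ Etil →
        Etil ⊆ closedBall 0 (R ^ 2) →
        IsConvexCone σ' → s / R ≤ inradius (σ' ∩ closedBall 0 1) →
        ε ∈ Set.Ioo (0 : ℝ) (1 / 2) → (∃ i, ε ≤ |a i - 1|) →
        c * ε ≤ (volume ((Etil ∆ closedBall 0 1) ∩ σ')).toReal :=
  ellipsoid_far_from_ball_on_cone_general n R s hR hs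
end
end
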